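/- arXiv:1312.3710 — 5 statements merged into one kernel-verified Lean document; each statement's English description precedes it below -/
import Mathlib

section
/- The binary relation Ē_a = {(ξ̄, a(ξ)‾) : ξ cofinal with (01)^∞} on X* is regular; that is, its convolution ⊗Ē_a = {⊗(ξ̄, a(ξ)‾) : ξ cofinal with (01)^∞} is a regular language over (X_⋄)². -/
/-!
A sequence `ξ` cofinal with `(01)^∞` is `ξ̄` followed by the tail of `(01)^∞`, and `ξ̄` is the
unique such prefix whose last letter is off `(01)^∞`. Writing `ξ̄ = 1^r 0 s`, the map `a` sends `ξ`
to `0^r 1 s` followed by the same tail (when `ξ̄ = 1^r`, first extend it by letters of `(01)^∞`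
up to its first `0`); re-reducing, `⊗(ξ̄, a(ξ)‾)` is one of `(⋄,1)`, `(1,0)^r (⋄,0) (⋄,1)` with
`r` odd, `(1,0)^r (1,⋄) (0,⋄)` with `r` even, or `(1,0)^r (0,1) (b₁,b₁) ⋯ (bₖ,bₖ)` with
`k ≥ 1` and `bₖ` off `(01)^∞`. A finite automaton that remembers only the phase and the parity
of the position recognises exactly these words.
-/

/-- The infinite word `(01)^∞`: its letter at (0-indexed) position `n` is `1` iff `n` is odd. -/
def base01 : ℕ → Bool := fun n => decide (n % 2 = 1)

/-- The map `a` on infinite binary sequences: `a(0s) = 1s`, `a(1s) = 0·a(s)`. -/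
def aMap (ξ : ℕ → Bool) : ℕ → Bool :=
  fun n => if ∀ k < n, ξ k = true then !ξ n else ξ n

def Cofinal (ξ η : ℕ → Bool) : Prop := ∃ N : ℕ, ∀ n, N ≤ n → ξ n = η n

/-- The encoding `ξ̄` of a sequence `ξ` cofinal with `(01)^∞`: the prefix of `ξ` of length `l`,
where `l` is the largest position (1-indexed) at which `ξ` differs from `(01)^∞`; equivalently
the least `m` such that `ξ` agrees with `(01)^∞` from (0-indexed) position `m` on. -/
noncomputable def encode (ξ : ℕ → Bool) : List Bool :=
  List.ofFn (fun i : Fin (sInf {m : ℕ | ∀ n, m ≤ n → ξ n = base01 n}) => ξ i)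

/-- The convolution `⊗(u,v)` of two words over `X`, a word over the alphabet
`(X_⋄)² = (Option X)²`, with `none` playing the role of the padding symbol `⋄`. -/
def conv {α : Type*} (u v : List α) : List (Option α × Option α) :=
  List.ofFn (fun i : Fin (max u.length v.length) => (u[(i : ℕ)]?, v[(i : ℕ)]?))

section Convolution

variable {α : Type*}

@[simp]
lemma conv_nil_left (v : List α) : conv [] v = v.map fun b => (none, some b) := by
  apply List.ext_getElem <;> simp [conv]

@[simp]
lemma conv_nil_right (u : List α) : conv u [] = u.map fun a => (some a, none) := by
  apply List.ext_getElem <;> simp [conv]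

@[simp]
lemma conv_cons_cons (a b : α) (u v : List α) :
    conv (a :: u) (b :: v) = (some a, some b) :: conv u v := by
  apply List.ext_getElem
  · simp [conv]
  · rintro (_ | i) <;> simp [conv]

lemma conv_replicate_append (r : ℕ) (a b : α) (u v : List α) :
    conv (List.replicate r a ++ u) (List.replicate r b ++ v) =
      List.replicate r (some a, some b) ++ conv u v := by
  induction r with
  | zero => rfl
  | succ r ih => simp [List.replicate_succ, ih]

lemma conv_self (u : List α) : conv u u = u.map fun a => (some a, some a) := by
  induction u with
  | nil => rfl
  | cons a u ih => simp [ih]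

end Convolution

lemma List.exists_eq_replicate_true_or_append_false (u : List Bool) :
    ∃ r, u = List.replicate r true ∨ ∃ s, u = List.replicate r true ++ false :: s := by
  induction u with
  | nil => exact ⟨0, Or.inl rfl⟩
  | cons b u ih =>
    cases b
    · exact ⟨0, Or.inr ⟨u, rfl⟩⟩
    · obtain ⟨r, rfl | ⟨s, rfl⟩⟩ := ih
      · exact ⟨r + 1, Or.inl rfl⟩
      · exact ⟨r + 1, Or.inr ⟨s, rfl⟩⟩

@[simp]
lemma base01_zero : base01 0 = false := rfl

@[simp]
lemma base01_succ (n : ℕ) : base01 (n + 1) = !base01 n := by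
  simp only [base01]
  rcases Nat.mod_two_eq_zero_or_one n with h | h <;> simp [h, Nat.add_mod]

/-- `s`, read from a position at which `(01)^∞` has the letter `e`, ends off `(01)^∞`.
With `e = false` this says that `s` is the encoding of `extend false s`. -/
def EndsOff (e : Bool) (s : List Bool) : Prop :=
  s.getLast? ≠ some (xor e (base01 (s.length - 1)))

lemma endsOff_nil (e : Bool) : EndsOff e [] := by simp [EndsOff]

lemma endsOff_cons {e b : Bool} {s : List Bool} :
    EndsOff e (b :: s) ↔ (s = [] → b ≠ e) ∧ EndsOff (!e) s := by
  rcases List.eq_nil_or_concat s with rfl | ⟨l, c, rfl⟩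
  · simp [EndsOff]
  · simp [EndsOff, List.getLast?_cons]

lemma endsOff_append {e : Bool} {u s : List Bool} (hs : s ≠ []) :
    EndsOff e (u ++ s) ↔ EndsOff (xor e (base01 u.length)) s := by
  induction u generalizing e with
  | nil => simp
  | cons b u ih => simp [endsOff_cons, hs, ih]

lemma endsOff_append_singleton {e b : Bool} {u : List Bool} :
    EndsOff e (u ++ [b]) ↔ b ≠ xor e (base01 u.length) := by
  simp [endsOff_append, endsOff_cons, endsOff_nil]

/-- `u` followed by the alternating sequence that has the letter `e` at position `0`;
`extend false u` is `u` followed by the tail of `(01)^∞`. -/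
def extend (e : Bool) (u : List Bool) : ℕ → Bool := fun n => u.getD n (xor e (base01 n))

lemma extend_cons (e b : Bool) (u : List Bool) :
    extend e (b :: u) = Stream'.cons b (extend (!e) u) := by
  funext n
  cases n <;> simp [extend, Stream'.cons]

lemma extend_append_singleton {e b : Bool} {u : List Bool} (hb : b = xor e (base01 u.length)) :
    extend e (u ++ [b]) = extend e u := by
  subst hb
  funext n
  simp only [extend, List.getD_eq_getElem?_getD, List.getElem?_append, List.getElem?_singleton]
  grind

lemma extend_of_length_le (e : Bool) {u : List Bool} {n : ℕ} (hn : u.length ≤ n) :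
    extend e u n = xor e (base01 n) := by
  simp [extend, hn]

lemma cofinal_extend (u : List Bool) : Cofinal (extend false u) base01 :=
  ⟨u.length, fun _ hn => by simp [extend_of_length_le false hn]⟩

section Encoding

variable {ξ : ℕ → Bool}

lemma length_encode :
    (encode ξ).length = sInf {m | ∀ n, m ≤ n → ξ n = base01 n} := by
  simp [encode]

@[simp]
lemma getElem_encode {i : ℕ} (h : i < (encode ξ).length) : (encode ξ)[i] = ξ i := by
  simp [encode]

lemma eq_base01_of_length_encode_le (hξ : Cofinal ξ base01) {n : ℕ}
    (hn : (encode ξ).length ≤ n) : ξ n = base01 n := by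
  rw [length_encode] at hn
  exact Nat.sInf_mem hξ n hn

lemma extend_encode (hξ : Cofinal ξ base01) : extend false (encode ξ) = ξ := by
  funext n
  by_cases hn : n < (encode ξ).length
  · simp [extend, hn]
  · simp [extend, hn, eq_base01_of_length_encode_le hξ (not_lt.1 hn)]

lemma endsOff_encode (hξ : Cofinal ξ base01) : EndsOff false (encode ξ) := by
  rw [EndsOff, List.getLast?_eq_getElem?]
  intro h
  obtain ⟨hlt, hlast⟩ := List.getElem?_eq_some_iff.1 h
  rw [getElem_encode] at hlast
  have hmem : (encode ξ).length - 1 ∈ {m | ∀ n, m ≤ n → ξ n = base01 n} := by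
    intro n hn
    rcases hn.eq_or_lt with rfl | hn
    · simpa using hlast
    · exact eq_base01_of_length_encode_le hξ (by omega)
  have := Nat.sInf_le hmem
  rw [← length_encode] at this
  omega

lemma encode_extend {u : List Bool} (hu : EndsOff false u) : encode (extend false u) = u := by
  have hlen : (encode (extend false u)).length = u.length := by
    rw [length_encode]
    refine le_antisymm (Nat.sInf_le fun _ hn => by simp [extend_of_length_le false hn]) ?_
    refine le_csInf (cofinal_extend u) fun m hm => not_lt.1 fun hmu => hu ?_
    have hlast := hm (u.length - 1) (by omega)
    have hlt : u.length - 1 < u.length := by omega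
    simp only [extend, List.getD_eq_getElem?_getD, List.getElem?_eq_getElem hlt,
      Option.getD_some] at hlast
    rw [List.getLast?_eq_getElem?, List.getElem?_eq_getElem hlt, hlast, Bool.false_xor]
  apply List.ext_getElem hlen
  intro i hi hi'
  simp [extend, hi']

end Encoding

lemma aMap_cons_false (s : ℕ → Bool) : aMap (Stream'.cons false s) = Stream'.cons true s := by
  funext n
  cases n with
  | zero => rfl
  | succ n =>
    have : ¬ ∀ k < n + 1, Stream'.cons false s k = true := fun h => by
      simpa [Stream'.cons] using h 0 n.succ_pos
    simp only [aMap, if_neg this]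
    rfl

lemma aMap_cons_true (s : ℕ → Bool) :
    aMap (Stream'.cons true s) = Stream'.cons false (aMap s) := by
  funext n
  cases n with
  | zero => rfl
  | succ n =>
    have : (∀ k < n + 1, Stream'.cons true s k = true) ↔ ∀ k < n, s k = true := by
      rw [Nat.forall_lt_succ_left]
      exact and_iff_right rfl
    simp only [aMap, this]
    rfl

lemma aMap_extend_replicate_true (e : Bool) (r : ℕ) (s : List Bool) :
    aMap (extend e (List.replicate r true ++ false :: s)) =
      extend e (List.replicate r false ++ true :: s) := by
  induction r generalizing e with
  | zero => rw [List.replicate_zero, List.replicate_zero, List.nil_append, List.nil_append,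
      extend_cons, aMap_cons_false, extend_cons]
  | succ r ih => rw [List.replicate_succ, List.replicate_succ, List.cons_append, List.cons_append,
      extend_cons, aMap_cons_true, ih, extend_cons]

/-- `⊗(ξ̄, a(ξ)‾)` for the sequence `ξ` with `ξ̄ = u`. -/
noncomputable def graphWord (u : List Bool) : List (Option Bool × Option Bool) :=
  conv u (encode (aMap (extend false u)))

lemma graphWord_nil : graphWord [] = [(none, some true)] := by
  have hξ : extend false [] = extend false [false] :=
    (extend_append_singleton (u := []) rfl).symm
  have hη := aMap_extend_replicate_true false 0 []
  simp only [List.replicate_zero, List.nil_append] at hη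
  rw [graphWord, hξ, hη, encode_extend (by simp [endsOff_cons, endsOff_nil])]
  simp

lemma graphWord_replicate {r : ℕ} (hr : base01 r = true) :
    graphWord (List.replicate r true) =
      List.replicate r (some true, some false) ++ [(none, some false), (none, some true)] := by
  have hξ : extend false (List.replicate (r + 1) true ++ [false]) =
      extend false (List.replicate r true) := by
    rw [extend_append_singleton (by simp [hr]), List.replicate_succ',
      extend_append_singleton (by simp [hr])]
  have hη : EndsOff false (List.replicate (r + 1) false ++ [true]) := by
    simp [endsOff_append_singleton, hr]
  rw [graphWord, ← hξ, aMap_extend_replicate_true, encode_extend hη]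
  simpa [List.replicate_succ'] using conv_replicate_append r true false [] [false, true]

lemma graphWord_replicate_append_false {r : ℕ} (hr : base01 r = false) :
    graphWord (List.replicate (r + 1) true ++ [false]) =
      List.replicate r (some true, some false) ++ [(some true, none), (some false, none)] := by
  have hη : extend false (List.replicate (r + 1) false ++ [true]) =
      extend false (List.replicate r false) := by
    rw [extend_append_singleton (by simp [hr]), List.replicate_succ',
      extend_append_singleton (by simp [hr])]
  have hreduced : EndsOff false (List.replicate r false) := by
    cases r with
    | zero => exact endsOff_nil false
    | succ r => simpa [List.replicate_succ', endsOff_append_singleton] using hr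
  rw [graphWord, aMap_extend_replicate_true, hη, encode_extend hreduced]
  simpa [List.replicate_succ'] using conv_replicate_append r true false [true, false] []

lemma graphWord_replicate_append_cons {r : ℕ} {s : List Bool} (hs : s ≠ [])
    (hu : EndsOff false (List.replicate r true ++ false :: s)) :
    graphWord (List.replicate r true ++ false :: s) =
      List.replicate r (some true, some false) ++
        (some false, some true) :: s.map fun b => (some b, some b) := by
  have hreduced : EndsOff false (List.replicate r false ++ true :: s) := by
    rw [← List.singleton_append, ← List.append_assoc, endsOff_append hs] at hu ⊢
    simpa using hu
  rw [graphWord, aMap_extend_replicate_true, encode_extend hreduced, conv_replicate_append,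
    conv_cons_cons, conv_self]

theorem DFA.mem_acceptsFrom_iff_of_cons_iff {α σ : Type*} (M : DFA α σ) (L : σ → Set (List α))
    (hnil : ∀ q, [] ∈ L q ↔ q ∈ M.accept)
    (hcons : ∀ q a w, a :: w ∈ L q ↔ w ∈ L (M.step q a)) (q : σ) (w : List α) :
    w ∈ M.acceptsFrom q ↔ w ∈ L q := by
  induction w generalizing q with
  | nil => exact (hnil q).symm
  | cons a w ih => exact (ih (M.step q a)).trans (hcons q a w).symm

abbrev Letter := Option Bool × Option Bool

/-- `ones e`: read `(1,0)^r` with `r ≥ 1`; `digits e ok`: read `(1,0)^r (0,1)` and then diagonal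
letters, `ok` recording whether the last one is off `(01)^∞`. In both, `e` is the letter of
`(01)^∞` at the next position. -/
inductive ConvState
  | start
  | ones (e : Bool)
  | padLeft
  | padRight
  | digits (e ok : Bool)
  | done
  | dead
  deriving Fintype

namespace ConvState

def onesStep (e : Bool) (c : Letter) : ConvState :=
  if c = (some true, some false) then ones (!e)
  else if c = (some false, some true) then digits (!e) false
  else if c = (none, some false) ∧ e = true then padLeft
  else if c = (some true, none) ∧ e = false then padRight
  else dead

def step : ConvState → Letter → ConvState
  | start, c => if c = (none, some true) then done else onesStep false c
  | ones e, c => onesStep e c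
  | padLeft, c => if c = (none, some true) then done else dead
  | padRight, c => if c = (some false, none) then done else dead
  | digits e _, (some a, some b) => if a = b then digits (!e) (a != e) else dead
  | _, _ => dead

def digitsLang (e ok : Bool) : Set (List Letter) :=
  {w | ∃ s, w = s.map (fun b => (some b, some b)) ∧ (s = [] → ok = true) ∧ EndsOff e s}

def afterOnesLang (e : Bool) : Set (List Letter) :=
  {w | (e = true ∧ w = [(none, some false), (none, some true)]) ∨
    (e = false ∧ w = [(some true, none), (some false, none)]) ∨
    ∃ w', w = (some false, some true) :: w' ∧ w' ∈ digitsLang (!e) false}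

def onesLang (e : Bool) : Set (List Letter) :=
  {w | ∃ r t, w = List.replicate r (some true, some false) ++ t ∧
    t ∈ afterOnesLang (xor e (base01 r))}

def lang : ConvState → Set (List Letter)
  | start => insert [(none, some true)] (onesLang false)
  | ones e => onesLang e
  | padLeft => {[(none, some true)]}
  | padRight => {[(some false, none)]}
  | digits e ok => digitsLang e ok
  | done => {[]}
  | dead => ∅

lemma cons_mem_digitsLang {e ok : Bool} {c : Letter} {w : List Letter} :
    c :: w ∈ digitsLang e ok ↔ ∃ b, c = (some b, some b) ∧ w ∈ digitsLang (!e) (b != e) := by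
  constructor
  · rintro ⟨_ | ⟨b, s⟩, hw, -, hs⟩
    · simp at hw
    · obtain ⟨rfl, rfl⟩ := List.cons_eq_cons.1 hw
      obtain ⟨hb, hs⟩ := endsOff_cons.1 hs
      exact ⟨b, rfl, s, rfl, by simpa using hb, hs⟩
  · rintro ⟨b, rfl, s, rfl, hok, hs⟩
    exact ⟨b :: s, rfl, by simp, endsOff_cons.2 ⟨by simpa using hok, hs⟩⟩

lemma cons_mem_afterOnesLang {e : Bool} {c : Letter} {w : List Letter} :
    c :: w ∈ afterOnesLang e ↔ (e = true ∧ c = (none, some false) ∧ w = [(none, some true)]) ∨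
      (e = false ∧ c = (some true, none) ∧ w = [(some false, none)]) ∨
      (c = (some false, some true) ∧ w ∈ digitsLang (!e) false) := by
  simp [afterOnesLang]

lemma cons_mem_onesLang {e : Bool} {c : Letter} {w : List Letter} :
    c :: w ∈ onesLang e ↔
      (c = (some true, some false) ∧ w ∈ onesLang (!e)) ∨ c :: w ∈ afterOnesLang e := by
  constructor
  · rintro ⟨_ | r, t, hw, ht⟩
    · simp only [List.replicate_zero, List.nil_append] at hw
      exact Or.inr (by simpa [hw] using ht)
    · obtain ⟨rfl, rfl⟩ := List.cons_eq_cons.1 hw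
      exact Or.inl ⟨rfl, r, t, rfl, by simpa using ht⟩
  · rintro (⟨rfl, r, t, rfl, ht⟩ | h)
    · exact ⟨r + 1, t, rfl, by simpa using ht⟩
    · exact ⟨0, c :: w, rfl, by simpa using h⟩

lemma cons_mem_onesLang_iff_mem_lang_onesStep {e : Bool} {c : Letter} {w : List Letter} :
    c :: w ∈ onesLang e ↔ w ∈ lang (onesStep e c) := by
  rw [cons_mem_onesLang, cons_mem_afterOnesLang, onesStep]
  split_ifs <;> grind [lang]

lemma nil_mem_lang_iff (q : ConvState) :
    [] ∈ lang q ↔ q = done ∨ ∃ e, q = digits e true := by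
  cases q <;> simp [lang, onesLang, afterOnesLang, digitsLang, endsOff_nil]

lemma cons_mem_lang_iff (q : ConvState) (c : Letter) (w : List Letter) :
    c :: w ∈ lang q ↔ w ∈ lang (step q c) := by
  cases q with
  | start =>
    rw [lang, Set.mem_insert_iff, cons_mem_onesLang_iff_mem_lang_onesStep, step]
    split_ifs with hc
    · simp [hc, lang, onesStep]
    · simp [hc]
  | ones e => exact cons_mem_onesLang_iff_mem_lang_onesStep
  | digits e ok =>
    rw [lang, cons_mem_digitsLang]
    rcases c with ⟨_ | _ | _, _ | _ | _⟩ <;> simp [step, lang]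
  | padLeft => by_cases hc : c = (none, some true) <;> simp [lang, step, hc]
  | padRight => by_cases hc : c = (some false, none) <;> simp [lang, step, hc]
  | done => simp [lang, step]
  | dead => simp [lang, step]

lemma exists_graphWord_of_mem_lang_start {w : List Letter} (hw : w ∈ lang start) :
    ∃ u, EndsOff false u ∧ graphWord u = w := by
  rcases hw with rfl | ⟨r, t, rfl, ht⟩
  · exact ⟨[], endsOff_nil false, graphWord_nil⟩
  rw [Bool.false_xor] at ht
  rcases ht with ⟨hr, rfl⟩ | ⟨hr, rfl⟩ | ⟨_, rfl, s, rfl, hs, hreduced⟩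
  · refine ⟨List.replicate r true, ?_, graphWord_replicate hr⟩
    cases r with
    | zero => simp at hr
    | succ r => simpa [List.replicate_succ', endsOff_append_singleton] using hr
  · exact ⟨List.replicate (r + 1) true ++ [false], by simp [endsOff_append_singleton, hr],
      graphWord_replicate_append_false hr⟩
  · have hs : s ≠ [] := fun h => by simpa using hs h
    have hu : EndsOff false (List.replicate r true ++ false :: s) := by
      rw [← List.singleton_append, ← List.append_assoc, endsOff_append hs]
      simpa using hreduced
    exact ⟨_, hu, graphWord_replicate_append_cons hs hu⟩

lemma graphWord_mem_lang_start {u : List Bool} (hu : EndsOff false u) :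
    graphWord u ∈ lang start := by
  obtain ⟨r, rfl | ⟨s, rfl⟩⟩ := u.exists_eq_replicate_true_or_append_false
  · cases r with
    | zero => exact Or.inl graphWord_nil
    | succ r =>
      have hr : base01 (r + 1) = true := by
        simpa [List.replicate_succ', endsOff_append_singleton] using hu
      rw [graphWord_replicate hr]
      exact Or.inr ⟨r + 1, _, rfl, Or.inl ⟨by simpa using hr, rfl⟩⟩
  · rcases eq_or_ne s [] with rfl | hs
    · have hr : base01 r = true := by simpa [endsOff_append_singleton] using hu
      cases r with
      | zero => simp at hr
      | succ r =>
        rw [graphWord_replicate_append_false (by simpa using hr)]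
        exact Or.inr ⟨r, _, rfl, Or.inr (Or.inl ⟨by simpa using hr, rfl⟩)⟩
    · rw [graphWord_replicate_append_cons hs hu]
      refine Or.inr ⟨r, _, rfl, Or.inr (Or.inr ⟨_, rfl, s, rfl, fun h => absurd h hs, ?_⟩)⟩
      rw [← List.singleton_append, ← List.append_assoc, endsOff_append hs] at hu
      simpa using hu

end ConvState

def convDFA : DFA Letter ConvState where
  step := ConvState.step
  start := .start
  accept := {q | q = .done ∨ ∃ e, q = .digits e true}

lemma mem_accepts_convDFA {w : List Letter} : w ∈ convDFA.accepts ↔ w ∈ ConvState.lang .start :=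
  DFA.mem_acceptsFrom_iff_of_cons_iff convDFA ConvState.lang ConvState.nil_mem_lang_iff
    ConvState.cons_mem_lang_iff .start w

theorem Ea_isRegular :
    Language.IsRegular
      {p : List (Option Bool × Option Bool) |
        ∃ ξ : ℕ → Bool, Cofinal ξ base01 ∧ conv (encode ξ) (encode (aMap ξ)) = p} := by
  refine ⟨ConvState, inferInstance, convDFA, ?_⟩
  ext w
  rw [mem_accepts_convDFA]
  constructor
  · intro hw
    obtain ⟨u, hu, rfl⟩ := ConvState.exists_graphWord_of_mem_lang_start hw
    exact ⟨extend false u, cofinal_extend u, by rw [encode_extend hu]; rfl⟩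
  · rintro ⟨ξ, hξ, rfl⟩
    have := ConvState.graphWord_mem_lang_start (endsOff_encode hξ)
    rwa [graphWord, extend_encode hξ] at this
end

section
/- For every ω = x₁x₂x₃… ∈ {0,1}^∞ and every n ≥ 1, the integers c₁^ω, …, c_n^ω are well defined (the required largest nonpositive, respectively smallest positive, integer exists at each step), and the set ℤ \ ⋃_{k=1}^{n} (c_k^ω + 2^k ℤ) is a single residue class modulo 2^n. -/
/-!
STATEMENT 9: For every ω ∈ {0,1}^∞ and n ≥ 1, the integers c₁^ω, …, c_n^ω are well defined
(the required largest nonpositive / smallest positive integer exists at each step), and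
ℤ \ ⋃_{k=1}^{n} (c_k^ω + 2^k ℤ) is a single residue class modulo 2^n.
-/

/-- The integers `c_n^ω` (for `n ≥ 1`; `cseq ω 0` is a junk value): if `x_n = ω (n-1) = 0`,
`c_n^ω` is the largest nonpositive integer not lying in any progression `c_k^ω + 2^k ℤ`,
`1 ≤ k ≤ n-1` (these progressions are the endpoint sets of the edge families `E_ω^k`);
if `x_n = 1`, it is the smallest such positive integer. Defined via `sSup`/`sInf` on `ℤ`,
which take junk values if the required extremum does not exist. -/
noncomputable def cseq (ω : ℕ → Bool) : ℕ → ℤ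
  | 0 => 0
  | n + 1 =>
    if ω n = false then
      sSup {m : ℤ | m ≤ 0 ∧ ∀ k, 1 ≤ k → k ≤ n → ¬ (2 ^ k : ℤ) ∣ (m - cseq ω k)}
    else
      sInf {m : ℤ | 1 ≤ m ∧ ∀ k, 1 ≤ k → k ≤ n → ¬ (2 ^ k : ℤ) ∣ (m - cseq ω k)}


lemma class_split (n : ℕ) (c r : ℤ) (hc : (2 ^ n : ℤ) ∣ c - r) :
    {m : ℤ | (2 ^ n : ℤ) ∣ m - r ∧ ¬ (2 ^ (n + 1) : ℤ) ∣ m - c} =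
      {m : ℤ | (2 ^ (n + 1) : ℤ) ∣ m - (c + 2 ^ n)} := by
  have hpne : (2 ^ n : ℤ) ≠ 0 := pow_ne_zero n two_ne_zero
  ext m
  simp only [Set.mem_setOf_eq]
  constructor
  · rintro ⟨⟨t, ht⟩, h2⟩
    obtain ⟨s, hs⟩ := hc
    have hmc : m - c = 2 ^ n * (t - s) := by rw [mul_sub, ← ht, ← hs]; ring
    have hodd : ¬ (2 ∣ (t - s)) := by
      rintro ⟨u, hu⟩
      exact h2 ⟨u, by rw [hmc, hu, pow_succ]; ring⟩
    obtain ⟨u, hu⟩ : ∃ u, t - s = 2 * u + 1 := ⟨(t - s - 1) / 2, by omega⟩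
    exact ⟨u, by rw [sub_add_eq_sub_sub, hmc, hu, pow_succ]; ring⟩
  · rintro ⟨s, hs⟩
    have hmc : m - c = 2 ^ n * (2 * s + 1) := by
      have : m - (c + 2 ^ n) = 2 ^ (n + 1) * s := hs
      rw [pow_succ] at this; linarith [this]
    obtain ⟨u, hu⟩ := hc
    constructor
    · exact ⟨2 * s + 1 + u, by rw [show m - r = (m - c) + (c - r) by ring, hmc, hu]; ring⟩
    · rintro ⟨w, hw⟩
      rw [hmc, pow_succ] at hw
      have : 2 * s + 1 = 2 * w := mul_left_cancel₀ hpne (by linarith [hw])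
      omega

/-- Main inductive step: if the unsieved set after `n` steps is a residue class mod `2^n`,
then `cseq ω (n+1)` is the greatest/least element of the appropriate set, and the unsieved
set after `n+1` steps is a residue class mod `2^(n+1)`. -/
lemma cseq_step (ω : ℕ → Bool) (n : ℕ) (r : ℤ)
    (h : {m : ℤ | ∀ k, 1 ≤ k → k ≤ n → ¬ (2 ^ k : ℤ) ∣ (m - cseq ω k)} =
      {m : ℤ | (2 ^ n : ℤ) ∣ (m - r)}) :
    (if ω n = false then
        IsGreatest {m : ℤ | m ≤ 0 ∧ ∀ k, 1 ≤ k → k ≤ n → ¬ (2 ^ k : ℤ) ∣ (m - cseq ω k)}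
          (cseq ω (n + 1))
      else
        IsLeast {m : ℤ | 1 ≤ m ∧ ∀ k, 1 ≤ k → k ≤ n → ¬ (2 ^ k : ℤ) ∣ (m - cseq ω k)}
          (cseq ω (n + 1))) ∧
    ∃ r' : ℤ, {m : ℤ | ∀ k, 1 ≤ k → k ≤ n + 1 → ¬ (2 ^ k : ℤ) ∣ (m - cseq ω k)} =
      {m : ℤ | (2 ^ (n + 1) : ℤ) ∣ (m - r')} := by
  have hp1 : (1 : ℤ) ≤ 2 ^ n := one_le_pow₀ (by norm_num)
  have hmemiff : ∀ m : ℤ, (∀ k, 1 ≤ k → k ≤ n → ¬ (2 ^ k : ℤ) ∣ (m - cseq ω k)) ↔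
      (2 ^ n : ℤ) ∣ (m - r) := fun m => Set.ext_iff.mp h m
  -- well-definedness
  have hwd : if ω n = false then
        IsGreatest {m : ℤ | m ≤ 0 ∧ ∀ k, 1 ≤ k → k ≤ n → ¬ (2 ^ k : ℤ) ∣ (m - cseq ω k)}
          (cseq ω (n + 1))
      else
        IsLeast {m : ℤ | 1 ≤ m ∧ ∀ k, 1 ≤ k → k ≤ n → ¬ (2 ^ k : ℤ) ∣ (m - cseq ω k)}
          (cseq ω (n + 1)) := by
    split_ifs with hb
    · -- greatest nonpositive
      have hne : {m : ℤ | m ≤ 0 ∧ ∀ k, 1 ≤ k → k ≤ n → ¬ (2 ^ k : ℤ) ∣ (m - cseq ω k)}.Nonempty := by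
        refine ⟨r - 2 ^ n * |r|, ?_, ?_⟩
        · have h1 : |r| ≤ 2 ^ n * |r| :=
            le_mul_of_one_le_left (abs_nonneg r) hp1
          have h2 : r ≤ |r| := le_abs_self r
          linarith
        · rw [hmemiff]; exact ⟨-|r|, by ring⟩
      have hbd : BddAbove {m : ℤ | m ≤ 0 ∧ ∀ k, 1 ≤ k → k ≤ n → ¬ (2 ^ k : ℤ) ∣ (m - cseq ω k)} :=
        ⟨0, fun m hm => hm.1⟩
      have : cseq ω (n + 1) = sSup {m : ℤ | m ≤ 0 ∧ ∀ k, 1 ≤ k → k ≤ n →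
          ¬ (2 ^ k : ℤ) ∣ (m - cseq ω k)} := by simp [cseq, hb]
      rw [this]
      exact ⟨Int.csSup_mem hne hbd, fun b hb' => le_csSup hbd hb'⟩
    · -- least positive
      have hne : {m : ℤ | 1 ≤ m ∧ ∀ k, 1 ≤ k → k ≤ n → ¬ (2 ^ k : ℤ) ∣ (m - cseq ω k)}.Nonempty := by
        refine ⟨r + 2 ^ n * (|r| + 1), ?_, ?_⟩
        · have h1 : |r| + 1 ≤ 2 ^ n * (|r| + 1) :=
            le_mul_of_one_le_left (by positivity) hp1
          have h2 : -r ≤ |r| := neg_le_abs r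
          linarith
        · rw [hmemiff]; exact ⟨|r| + 1, by ring⟩
      have hbd : BddBelow {m : ℤ | 1 ≤ m ∧ ∀ k, 1 ≤ k → k ≤ n → ¬ (2 ^ k : ℤ) ∣ (m - cseq ω k)} :=
        ⟨1, fun m hm => hm.1⟩
      have : cseq ω (n + 1) = sInf {m : ℤ | 1 ≤ m ∧ ∀ k, 1 ≤ k → k ≤ n →
          ¬ (2 ^ k : ℤ) ∣ (m - cseq ω k)} := by simp [cseq, hb]
      rw [this]
      exact ⟨Int.csInf_mem hne hbd, fun b hb' => csInf_le hbd hb'⟩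
  refine ⟨hwd, ?_⟩
  -- cseq ω (n+1) belongs to the previous unsieved set
  set c := cseq ω (n + 1) with hcdef
  have hcmem : (2 ^ n : ℤ) ∣ (c - r) := by
    rw [← hmemiff]
    split_ifs at hwd with hb
    · exact hwd.1.2
    · exact hwd.1.2
  refine ⟨c + 2 ^ n, ?_⟩
  rw [← class_split n c r hcmem]
  ext m
  simp only [Set.mem_setOf_eq]
  constructor
  · intro hm
    refine ⟨(hmemiff m).mp (fun k hk1 hk2 => hm k hk1 (by omega)), hm (n + 1) (by omega) le_rfl⟩
  · rintro ⟨h1, h2⟩ k hk1 hk2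
    rcases Nat.lt_or_ge k (n + 1) with hk | hk
    · exact (hmemiff m).mpr h1 k hk1 (by omega)
    · have : k = n + 1 := by omega
      rw [this]; exact h2

lemma cseq_residue (ω : ℕ → Bool) (n : ℕ) :
    ∃ r : ℤ, {m : ℤ | ∀ k, 1 ≤ k → k ≤ n → ¬ (2 ^ k : ℤ) ∣ (m - cseq ω k)} =
      {m : ℤ | (2 ^ n : ℤ) ∣ (m - r)} := by
  induction n with
  | zero => exact ⟨0, by ext m; simp; omega⟩
  | succ n ih =>
    obtain ⟨r, hr⟩ := ih
    exact (cseq_step ω n r hr).2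

theorem cseq_wellDefined_and_complement_is_residue_class (ω : ℕ → Bool) (n : ℕ) (hn : 1 ≤ n) :
    (∀ k, 1 ≤ k → k ≤ n →
      if ω (k - 1) = false then
        IsGreatest {m : ℤ | m ≤ 0 ∧ ∀ j, 1 ≤ j → j ≤ k - 1 → ¬ (2 ^ j : ℤ) ∣ (m - cseq ω j)}
          (cseq ω k)
      else
        IsLeast {m : ℤ | 1 ≤ m ∧ ∀ j, 1 ≤ j → j ≤ k - 1 → ¬ (2 ^ j : ℤ) ∣ (m - cseq ω j)}
          (cseq ω k)) ∧
    ∃ r : ℤ, {m : ℤ | ∀ k, 1 ≤ k → k ≤ n → ¬ (2 ^ k : ℤ) ∣ (m - cseq ω k)} =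
      {m : ℤ | (2 ^ n : ℤ) ∣ (m - r)} := by
  refine ⟨?_, cseq_residue ω n⟩
  intro k hk1 hk2
  obtain ⟨j, rfl⟩ : ∃ j, k = j + 1 := ⟨k - 1, by omega⟩
  obtain ⟨r, hr⟩ := cseq_residue ω j
  simpa using (cseq_step ω j r hr).1
end

section
/- If ω ∈ {0,1}^∞ contains infinitely many 0's and infinitely many 1's, then the arithmetic progressions c_n^ω + 2^n ℤ, for n ≥ 1, form a partition of ℤ: every integer belongs to exactly one of them. Consequently, every integer is an endpoint of exactly two edges of ⋃_{n≥1} E_ω^n and of exactly four edges of ⋃_{n≥0} E_ω^n. -/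
/-- The edge family `E_ω^n`: `E_ω^0 = {(m, m+1) : m ∈ ℤ}` and, for `n ≥ 1`,
`E_ω^n = {(2^n z + c_n^ω, 2^n (z+1) + c_n^ω) : z ∈ ℤ}`. -/
noncomputable def Eset (ω : ℕ → Bool) : ℕ → Set (ℤ × ℤ)
  | 0 => {p | ∃ m : ℤ, p = (m, m + 1)}
  | n + 1 => {p | ∃ z : ℤ,
      p = (2 ^ (n + 1) * z + cseq ω (n + 1), 2 ^ (n + 1) * (z + 1) + cseq ω (n + 1))}

theorem Int.modEq_add_iff_modEq_and_not_modEq_two_mul {a b d : ℤ} (hd : d ≠ 0) :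
    a ≡ b + d [ZMOD 2 * d] ↔ a ≡ b [ZMOD d] ∧ ¬ a ≡ b [ZMOD 2 * d] := by
  simp only [Int.modEq_iff_dvd]
  constructor
  · rintro ⟨s, hs⟩
    refine ⟨⟨2 * s - 1, by linear_combination hs⟩, ?_⟩
    rintro ⟨u, hu⟩
    have : 2 * u = 2 * s - 1 := mul_left_cancel₀ hd (by linear_combination hs - hu)
    omega
  · rintro ⟨⟨t, ht⟩, hn⟩
    obtain ⟨s, rfl⟩ | ⟨s, rfl⟩ := Int.even_or_odd t
    · exact absurd ⟨s, by rw [ht]; ring⟩ hn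
    · exact ⟨s + 1, by linear_combination ht⟩

theorem Int.isGreatest_sSup_nonpos_modEq {a d : ℤ} (hd : 0 < d) :
    IsGreatest {m : ℤ | m ≤ 0 ∧ m ≡ a [ZMOD d]} (sSup {m : ℤ | m ≤ 0 ∧ m ≡ a [ZMOD d]}) := by
  have hne : {m : ℤ | m ≤ 0 ∧ m ≡ a [ZMOD d]}.Nonempty := by
    refine ⟨a % d - d, ?_, ?_⟩
    · linarith [Int.emod_lt_of_pos a hd]
    · simp [Int.ModEq]
  have hbdd : BddAbove {m : ℤ | m ≤ 0 ∧ m ≡ a [ZMOD d]} := ⟨0, fun _ hm => hm.1⟩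
  exact ⟨Int.csSup_mem hne hbdd, fun _ hm => le_csSup hbdd hm⟩

theorem Int.isLeast_sInf_pos_modEq {a d : ℤ} (hd : 0 < d) :
    IsLeast {m : ℤ | 1 ≤ m ∧ m ≡ a [ZMOD d]} (sInf {m : ℤ | 1 ≤ m ∧ m ≡ a [ZMOD d]}) := by
  have hne : {m : ℤ | 1 ≤ m ∧ m ≡ a [ZMOD d]}.Nonempty := by
    refine ⟨a % d + d, ?_, ?_⟩
    · linarith [Int.emod_nonneg a hd.ne']
    · simp [Int.ModEq]
  have hbdd : BddBelow {m : ℤ | 1 ≤ m ∧ m ≡ a [ZMOD d]} := ⟨1, fun _ hm => hm.1⟩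
  exact ⟨Int.csInf_mem hne hbdd, fun _ hm => csInf_le hbdd hm⟩

namespace DyadicProgression

variable (ω : ℕ → Bool)

def Uncovered (n : ℕ) (m : ℤ) : Prop :=
  ∀ k, 1 ≤ k → k ≤ n → ¬ (2 ^ k : ℤ) ∣ (m - cseq ω k)

noncomputable def uncoveredResidue : ℕ → ℤ
  | 0 => 0
  | n + 1 => cseq ω (n + 1) + 2 ^ n

variable {ω}

theorem cseq_succ (n : ℕ) :
    cseq ω (n + 1) =
      if ω n = false then sSup {m : ℤ | m ≤ 0 ∧ Uncovered ω n m}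
      else sInf {m : ℤ | 1 ≤ m ∧ Uncovered ω n m} := by
  rw [cseq]; rfl

theorem uncovered_succ_iff {n : ℕ} {m : ℤ} :
    Uncovered ω (n + 1) m ↔ Uncovered ω n m ∧ ¬ m ≡ cseq ω (n + 1) [ZMOD 2 ^ (n + 1)] := by
  rw [Int.modEq_comm, Int.modEq_iff_dvd]
  refine ⟨fun h => ⟨fun k hk hkn => h k hk (by omega), h (n + 1) (by omega) le_rfl⟩, ?_⟩
  rintro ⟨h, hn⟩ k hk hkn
  rcases Nat.lt_or_eq_of_le hkn with hkn | rfl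
  · exact h k hk (by omega)
  · exact hn

section Step

variable {n : ℕ} {a : ℤ} (hU : ∀ m, Uncovered ω n m ↔ m ≡ a [ZMOD 2 ^ n])
include hU

theorem isGreatest_cseq_succ (h : ω n = false) :
    IsGreatest {m : ℤ | m ≤ 0 ∧ Uncovered ω n m} (cseq ω (n + 1)) := by
  simp only [cseq_succ, h, if_true, hU]
  exact Int.isGreatest_sSup_nonpos_modEq (by positivity)

theorem isLeast_cseq_succ (h : ω n = true) :
    IsLeast {m : ℤ | 1 ≤ m ∧ Uncovered ω n m} (cseq ω (n + 1)) := by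
  simp only [cseq_succ, h, Bool.true_eq_false, if_false, hU]
  exact Int.isLeast_sInf_pos_modEq (by positivity)

theorem uncovered_cseq_succ_of_iff : Uncovered ω n (cseq ω (n + 1)) := by
  cases h : ω n
  · exact (isGreatest_cseq_succ hU h).1.2
  · exact (isLeast_cseq_succ hU h).1.2

end Step

theorem uncovered_iff_modEq (n : ℕ) (m : ℤ) :
    Uncovered ω n m ↔ m ≡ uncoveredResidue ω n [ZMOD 2 ^ n] := by
  induction n generalizing m with
  | zero =>
    simp only [Uncovered, pow_zero, Int.modEq_one, iff_true]
    omega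
  | succ n ih =>
    have hc := (ih _).1 (uncovered_cseq_succ_of_iff ih)
    have hm : Uncovered ω n m ↔ m ≡ cseq ω (n + 1) [ZMOD 2 ^ n] :=
      (ih m).trans ⟨fun h => h.trans hc.symm, fun h => h.trans hc⟩
    rw [uncovered_succ_iff, hm, uncoveredResidue, pow_succ',
      Int.modEq_add_iff_modEq_and_not_modEq_two_mul (by positivity)]

theorem uncovered_cseq_succ (n : ℕ) : Uncovered ω n (cseq ω (n + 1)) :=
  uncovered_cseq_succ_of_iff (uncovered_iff_modEq n)

theorem two_pow_le_abs_sub_cseq_succ {n : ℕ} {m : ℤ} (hm : Uncovered ω (n + 1) m) :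
    2 ^ n ≤ |m - cseq ω (n + 1)| := by
  obtain ⟨hmn, hmc⟩ := uncovered_succ_iff.1 hm
  have hmodEq : m ≡ cseq ω (n + 1) [ZMOD 2 ^ n] :=
    ((uncovered_iff_modEq n m).1 hmn).trans
      ((uncovered_iff_modEq n _).1 (uncovered_cseq_succ n)).symm
  have hne : m - cseq ω (n + 1) ≠ 0 := fun h => hmc (by rw [sub_eq_zero.1 h])
  exact Int.le_of_dvd (abs_pos.2 hne) ((dvd_abs _ _).2 hmodEq.symm.dvd)

theorem exists_dvd_sub_cseq (h0 : ∀ N : ℕ, ∃ n, N ≤ n ∧ ω n = false)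
    (h1 : ∀ N : ℕ, ∃ n, N ≤ n ∧ ω n = true) (m : ℤ) :
    ∃ k, 1 ≤ k ∧ (2 ^ k : ℤ) ∣ (m - cseq ω k) := by
  by_contra! hm
  have hU : ∀ n, Uncovered ω n m := fun n k hk _ => hm k hk
  have hpow : ∀ n : ℕ, (n : ℤ) < 2 ^ n := fun n => by exact_mod_cast Nat.lt_two_pow_self
  rcases le_or_gt 1 m with hpos | hnonpos
  · obtain ⟨n, hn, hωn⟩ := h1 m.natAbs
    have hc := isLeast_cseq_succ (uncovered_iff_modEq n) hωn
    have hcm : cseq ω (n + 1) ≤ m := hc.2 ⟨hpos, hU n⟩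
    have hdist := two_pow_le_abs_sub_cseq_succ (hU (n + 1))
    rw [abs_of_nonneg (sub_nonneg.2 hcm)] at hdist
    have hc_pos := hc.1.1
    have hn_lt := hpow n
    omega
  · obtain ⟨n, hn, hωn⟩ := h0 m.natAbs
    have hc := isGreatest_cseq_succ (uncovered_iff_modEq n) hωn
    have hmc : m ≤ cseq ω (n + 1) := hc.2 ⟨by omega, hU n⟩
    have hdist := two_pow_le_abs_sub_cseq_succ (hU (n + 1))
    rw [abs_of_nonpos (sub_nonpos.2 hmc)] at hdist
    have hc_nonpos := hc.1.1
    have hn_lt := hpow n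
    omega

theorem eq_of_dvd_sub_cseq {m : ℤ} {j k : ℕ} (hj : 1 ≤ j) (hk : 1 ≤ k)
    (hmj : (2 ^ j : ℤ) ∣ (m - cseq ω j)) (hmk : (2 ^ k : ℤ) ∣ (m - cseq ω k)) : j = k := by
  by_contra hne
  wlog hjk : j < k generalizing j k
  · exact this hk hj hmk hmj (Ne.symm hne) (by omega)
  obtain ⟨n, rfl⟩ : ∃ n, k = n + 1 := ⟨k - 1, by omega⟩
  have hmk' : (2 ^ j : ℤ) ∣ m - cseq ω (n + 1) := (pow_dvd_pow 2 hjk.le).trans hmk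
  have hcj := dvd_sub hmj hmk'
  rw [sub_sub_sub_cancel_left] at hcj
  exact uncovered_cseq_succ n j hj (by omega) hcj

theorem existsUnique_dvd_sub_cseq (h0 : ∀ N : ℕ, ∃ n, N ≤ n ∧ ω n = false)
    (h1 : ∀ N : ℕ, ∃ n, N ≤ n ∧ ω n = true) (m : ℤ) :
    ∃! k, 1 ≤ k ∧ (2 ^ k : ℤ) ∣ (m - cseq ω k) :=
  let ⟨k, hk⟩ := exists_dvd_sub_cseq h0 h1 m
  ⟨k, hk, fun _ hj => eq_of_dvd_sub_cseq hj.1 hk.1 hj.2 hk.2⟩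

abbrev edgesAt (m d : ℤ) : Set (ℤ × ℤ) := {(m, m + d), (m - d, m)}

theorem ncard_edgesAt {m d : ℤ} (hd : d ≠ 0) : (edgesAt m d).ncard = 2 :=
  Set.ncard_pair (by simp [Prod.ext_iff, hd])

theorem disjoint_edgesAt {m d d' : ℤ} (hd : 0 < d) (hdd' : d < d') :
    Disjoint (edgesAt m d) (edgesAt m d') := by
  simp only [edgesAt, Set.disjoint_insert_left, Set.disjoint_insert_right,
    Set.disjoint_singleton, Set.mem_insert_iff, Set.mem_singleton_iff, ne_eq, Prod.ext_iff]
  omega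

/-- `cseq ω 0 = 0` is harmless here: for `k = 0` the divisibility is by `1`. -/
theorem mem_Eset_iff {k : ℕ} {e : ℤ × ℤ} :
    e ∈ Eset ω k ↔ e.2 = e.1 + 2 ^ k ∧ (2 ^ k : ℤ) ∣ e.1 - cseq ω k := by
  obtain ⟨a, b⟩ := e
  cases k with
  | zero => simp [Eset, Prod.ext_iff, eq_comm]
  | succ n =>
    simp only [Eset, Set.mem_ofPred_eq, Prod.ext_iff]
    constructor
    · rintro ⟨z, rfl, rfl⟩
      exact ⟨by ring, z, by ring⟩
    · rintro ⟨rfl, z, hz⟩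
      exact ⟨z, by linear_combination hz, by linear_combination hz⟩

theorem mem_Eset_and_incident_iff {k : ℕ} {m : ℤ} {e : ℤ × ℤ} :
    e ∈ Eset ω k ∧ (e.1 = m ∨ e.2 = m) ↔
      (2 ^ k : ℤ) ∣ m - cseq ω k ∧ e ∈ edgesAt m (2 ^ k) := by
  obtain ⟨a, b⟩ := e
  simp only [mem_Eset_iff, edgesAt, Set.mem_insert_iff, Set.mem_singleton_iff, Prod.ext_iff]
  constructor
  · rintro ⟨⟨rfl, hdvd⟩, rfl | rfl⟩
    · exact ⟨hdvd, Or.inl ⟨rfl, rfl⟩⟩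
    · refine ⟨?_, Or.inr ⟨by ring, rfl⟩⟩
      simpa [add_sub_right_comm] using hdvd
  · rintro ⟨hdvd, ⟨rfl, rfl⟩ | ⟨rfl, rfl⟩⟩
    · exact ⟨⟨rfl, hdvd⟩, Or.inl rfl⟩
    · refine ⟨⟨by ring, ?_⟩, Or.inr rfl⟩
      simpa [sub_right_comm] using hdvd

section Incident

variable {m : ℤ} {k₀ : ℕ} (hk₀ : ∀ k, 1 ≤ k ∧ (2 ^ k : ℤ) ∣ m - cseq ω k ↔ k = k₀)
include hk₀

theorem incident_edges_pos_eq :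
    {e ∈ ⋃ k ∈ Set.Ici 1, Eset ω k | e.1 = m ∨ e.2 = m} = edgesAt m (2 ^ k₀) := by
  ext e
  calc _ ↔ ∃ k, 1 ≤ k ∧ (e ∈ Eset ω k ∧ (e.1 = m ∨ e.2 = m)) := by
        simp only [Set.mem_ofPred_eq, Set.mem_iUnion, Set.mem_Ici, exists_prop,
          ← exists_and_right, and_assoc]
    _ ↔ ∃ k, (1 ≤ k ∧ (2 ^ k : ℤ) ∣ m - cseq ω k) ∧ e ∈ edgesAt m (2 ^ k) := by
        simp only [mem_Eset_and_incident_iff, and_assoc]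
    _ ↔ e ∈ edgesAt m (2 ^ k₀) := by simp only [hk₀, exists_eq_left]

theorem incident_edges_eq :
    {e ∈ ⋃ k, Eset ω k | e.1 = m ∨ e.2 = m} = edgesAt m 1 ∪ edgesAt m (2 ^ k₀) := by
  have hdvd : ∀ k, (2 ^ k : ℤ) ∣ m - cseq ω k ↔ k = 0 ∨ k = k₀ := by
    intro k
    rcases Nat.eq_zero_or_pos k with rfl | hk
    · simp
    · simp [← hk₀, hk.ne', Nat.one_le_iff_ne_zero]
  ext e
  calc _ ↔ ∃ k, e ∈ Eset ω k ∧ (e.1 = m ∨ e.2 = m) := by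
        simp only [Set.mem_ofPred_eq, Set.mem_iUnion, exists_and_right]
    _ ↔ ∃ k, (k = 0 ∨ k = k₀) ∧ e ∈ edgesAt m (2 ^ k) := by
        simp only [mem_Eset_and_incident_iff, hdvd]
    _ ↔ _ := by simp only [or_and_right, exists_or, exists_eq_left, pow_zero, Set.mem_union]

end Incident

end DyadicProgression

open DyadicProgression

theorem progressions_partition_of_infinitely_many_zeros_and_ones (ω : ℕ → Bool)
    (h0 : ∀ N : ℕ, ∃ n, N ≤ n ∧ ω n = false) (h1 : ∀ N : ℕ, ∃ n, N ≤ n ∧ ω n = true) :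
    (∀ m : ℤ, ∃! k : ℕ, 1 ≤ k ∧ (2 ^ k : ℤ) ∣ (m - cseq ω k)) ∧
    (∀ m : ℤ, {e ∈ ⋃ k ∈ Set.Ici 1, Eset ω k | e.1 = m ∨ e.2 = m}.ncard = 2) ∧
    (∀ m : ℤ, {e ∈ ⋃ k, Eset ω k | e.1 = m ∨ e.2 = m}.ncard = 4) := by
  have hpartition := existsUnique_dvd_sub_cseq h0 h1
  have hindex (m : ℤ) : ∃ k₀, ∀ k, 1 ≤ k ∧ (2 ^ k : ℤ) ∣ m - cseq ω k ↔ k = k₀ :=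
    let ⟨k₀, hk₀, hunique⟩ := hpartition m
    ⟨k₀, fun k => ⟨hunique k, fun h => h ▸ hk₀⟩⟩
  refine ⟨hpartition, fun m => ?_, fun m => ?_⟩
  · obtain ⟨k₀, hk₀⟩ := hindex m
    rw [incident_edges_pos_eq hk₀, ncard_edgesAt (by positivity)]
  · obtain ⟨k₀, hk₀⟩ := hindex m
    have hlen : (1 : ℤ) < 2 ^ k₀ :=
      one_lt_pow₀ one_lt_two (Nat.one_le_iff_ne_zero.1 ((hk₀ k₀).2 rfl).1)
    rw [incident_edges_eq hk₀, Set.ncard_union_eq (disjoint_edgesAt one_pos hlen),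
      ncard_edgesAt one_ne_zero, ncard_edgesAt (by positivity)]
end

section
/- If ω ∈ {0,1}^∞ contains only finitely many 0's or only finitely many 1's, then there is exactly one integer t that belongs to none of the arithmetic progressions c_n^ω + 2^n ℤ, n ≥ 1; every other integer belongs to exactly one of them. -/
open Set

theorem two_mul_dvd_sub_self_iff {a x : ℤ} (ha : a ≠ 0) : 2 * a ∣ x - a ↔ a ∣ x ∧ ¬ 2 * a ∣ x := by
  constructor
  · rintro ⟨y, hy⟩
    refine ⟨⟨2 * y + 1, by linarith⟩, ?_⟩
    rintro ⟨z, hz⟩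
    have := mul_left_cancel₀ ha (show a * (2 * y + 1) = a * (2 * z) by linarith)
    omega
  · rintro ⟨⟨y, rfl⟩, hy⟩
    obtain ⟨z, rfl⟩ | ⟨z, rfl⟩ := Int.even_or_odd y
    · exact absurd ⟨z, by ring⟩ hy
    · exact ⟨z, by ring⟩

theorem exists_mem_Ioc_dvd_sub {P : ℤ} (hP : 0 < P) (a d : ℤ) : ∃ m ∈ Ioc a (a + P), P ∣ m - d :=
  ⟨toIocMod hP a d, toIocMod_mem_Ioc hP a d, ⟨_, toIocMod_sub_self_eq_mul hP a d ▸ mul_comm _ _⟩⟩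

theorem csSup_nonpos_dvd_sub_spec {P : ℤ} (hP : 0 < P) (d : ℤ) :
    sSup {x : ℤ | x ≤ 0 ∧ P ∣ x - d} ∈ Ioc (-P) 0 ∧ P ∣ sSup {x : ℤ | x ≤ 0 ∧ P ∣ x - d} - d := by
  obtain ⟨m, hm, hmd⟩ := exists_mem_Ioc_dvd_sub hP (-P) d
  rw [neg_add_cancel] at hm
  have : IsGreatest {x : ℤ | x ≤ 0 ∧ P ∣ x - d} m := by
    refine ⟨⟨hm.2, hmd⟩, fun x ⟨hx, hxd⟩ => ?_⟩
    by_contra! hlt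
    have := Int.le_of_dvd (sub_pos.2 hlt) (by simpa using hxd.sub hmd)
    linarith [hm.1]
  exact this.csSup_eq ▸ ⟨hm, hmd⟩

theorem csInf_pos_dvd_sub_spec {P : ℤ} (hP : 0 < P) (d : ℤ) :
    sInf {x : ℤ | 1 ≤ x ∧ P ∣ x - d} ∈ Ioc 0 P ∧ P ∣ sInf {x : ℤ | 1 ≤ x ∧ P ∣ x - d} - d := by
  obtain ⟨m, hm, hmd⟩ := exists_mem_Ioc_dvd_sub hP 0 d
  rw [zero_add] at hm
  have : IsLeast {x : ℤ | 1 ≤ x ∧ P ∣ x - d} m := by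
    refine ⟨⟨hm.1, hmd⟩, fun x ⟨hx, hxd⟩ => ?_⟩
    by_contra! hlt
    have := Int.le_of_dvd (sub_pos.2 hlt) (by simpa using hmd.sub hxd)
    linarith [hm.2]
  exact this.csInf_eq ▸ ⟨hm, hmd⟩

def Uncovered (ω : ℕ → Bool) (n : ℕ) (m : ℤ) : Prop :=
  ∀ k, 1 ≤ k → k ≤ n → ¬ (2 ^ k : ℤ) ∣ (m - cseq ω k)

noncomputable def uncoveredResidue (ω : ℕ → Bool) : ℕ → ℤ
  | 0 => 0
  | n + 1 => cseq ω (n + 1) + 2 ^ n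

section

variable {ω : ℕ → Bool}

theorem Uncovered.mono {n n' : ℕ} {m : ℤ} (h : Uncovered ω n' m) (hn : n ≤ n') : Uncovered ω n m :=
  fun k hk hkn => h k hk (hkn.trans hn)

variable (ω) in
theorem uncovered_zero (m : ℤ) : Uncovered ω 0 m :=
  fun _ hk hk0 => absurd (hk.trans hk0) (by decide)

theorem uncovered_succ_iff {n : ℕ} {m : ℤ} :
    Uncovered ω (n + 1) m ↔ Uncovered ω n m ∧ ¬ (2 ^ (n + 1) : ℤ) ∣ m - cseq ω (n + 1) := by
  refine ⟨fun h => ⟨h.mono n.le_succ, h _ n.succ_pos le_rfl⟩, fun ⟨h, hn⟩ k hk hkn => ?_⟩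
  rcases hkn.lt_or_eq with hkn | rfl
  · exact h k hk (Nat.lt_succ_iff.1 hkn)
  · exact hn

variable (ω) in
theorem cseq_succ (n : ℕ) : cseq ω (n + 1) = if ω n = false
    then sSup {m : ℤ | m ≤ 0 ∧ Uncovered ω n m} else sInf {m : ℤ | 1 ≤ m ∧ Uncovered ω n m} := by
  rw [cseq]; rfl

theorem cseq_succ_spec_of_uncovered_iff {n : ℕ} {d : ℤ}
    (hU : ∀ m, Uncovered ω n m ↔ (2 ^ n : ℤ) ∣ m - d) :
    (2 ^ n : ℤ) ∣ cseq ω (n + 1) - d ∧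
      cseq ω (n + 1) ∈ if ω n = false then Ioc (-2 ^ n) 0 else Ioc 0 (2 ^ n) := by
  have hP : (0 : ℤ) < 2 ^ n := by positivity
  simp only [cseq_succ, hU]
  cases ω n
  · simpa using (csSup_nonpos_dvd_sub_spec hP d).symm
  · simpa using (csInf_pos_dvd_sub_spec hP d).symm

variable (ω) in
theorem uncovered_iff_dvd (n : ℕ) (m : ℤ) :
    Uncovered ω n m ↔ (2 ^ n : ℤ) ∣ m - uncoveredResidue ω n := by
  induction n generalizing m with
  | zero => simpa using uncovered_zero ω m
  | succ n ih =>
    have hc := (cseq_succ_spec_of_uncovered_iff ih).1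
    rw [uncovered_succ_iff, ih, uncoveredResidue, pow_succ', sub_add_eq_sub_sub,
      two_mul_dvd_sub_self_iff (by positivity)]
    refine and_congr_left' ?_
    rw [← sub_add_sub_cancel m (cseq ω (n + 1))]
    exact dvd_add_left hc

variable (ω) in
theorem uncovered_cseq_succ (n : ℕ) : Uncovered ω n (cseq ω (n + 1)) :=
  (uncovered_iff_dvd ω n _).2 (cseq_succ_spec_of_uncovered_iff (uncovered_iff_dvd ω n)).1

theorem cseq_succ_mem_Ioc_of_false {n : ℕ} (h : ω n = false) :
    cseq ω (n + 1) ∈ Ioc (-2 ^ n) 0 := by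
  simpa [h] using (cseq_succ_spec_of_uncovered_iff (uncovered_iff_dvd ω n)).2

theorem cseq_succ_mem_Ioc_of_true {n : ℕ} (h : ω n = true) :
    cseq ω (n + 1) ∈ Ioc 0 (2 ^ n) := by
  simpa [h] using (cseq_succ_spec_of_uncovered_iff (uncovered_iff_dvd ω n)).2

theorem Uncovered.of_dvd_sub {n : ℕ} {a b : ℤ} (ha : Uncovered ω n a) (h : (2 ^ n : ℤ) ∣ b - a) :
    Uncovered ω n b := by
  rw [uncovered_iff_dvd] at ha ⊢
  rw [← sub_add_sub_cancel b a]
  exact dvd_add h ha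

theorem uncovered_of_dvd_sub_cseq {n : ℕ} {m : ℤ} (h : (2 ^ (n + 1) : ℤ) ∣ m - cseq ω (n + 1)) :
    Uncovered ω n m :=
  (uncovered_cseq_succ ω n).of_dvd_sub ((pow_dvd_pow 2 n.le_succ).trans h)

theorem eq_of_dvd_sub_cseq {k j : ℕ} {m : ℤ} (hk : 1 ≤ k) (hj : 1 ≤ j)
    (hkm : (2 ^ k : ℤ) ∣ m - cseq ω k) (hjm : (2 ^ j : ℤ) ∣ m - cseq ω j) : k = j := by
  have not_dvd_of_lt : ∀ {k j : ℕ}, 1 ≤ k → k < j → (2 ^ k : ℤ) ∣ m - cseq ω k →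
      ¬ (2 ^ j : ℤ) ∣ m - cseq ω j := by
    rintro k (_ | j) hk hkj hkm hjm
    · omega
    · exact uncovered_of_dvd_sub_cseq hjm k hk (Nat.lt_succ_iff.1 hkj) hkm
  rcases lt_trichotomy k j with h | h | h
  · exact absurd hjm (not_dvd_of_lt hk h hkm)
  · exact h
  · exact absurd hkm (not_dvd_of_lt hj h hjm)

theorem eq_of_forall_uncovered {m t : ℤ} (hm : ∀ n, Uncovered ω n m) (ht : ∀ n, Uncovered ω n t) :
    m = t := by
  have hdvd (n : ℕ) : (2 : ℤ) ^ n ∣ m - t := by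
    have := ((uncovered_iff_dvd ω n m).1 (hm n)).sub ((uncovered_iff_dvd ω n t).1 (ht n))
    rwa [sub_sub_sub_cancel_right] at this
  by_contra hne
  exact FiniteMultiplicity.not_iff_forall.2 hdvd
    (Int.finiteMultiplicity_iff.2 ⟨by decide, sub_ne_zero.2 hne⟩)

theorem forall_uncovered_of_stable {N : ℕ} {t : ℤ} (hN : Uncovered ω N t)
    (hstep : ∀ n, N ≤ n → t ≠ cseq ω (n + 1) ∧ |t - cseq ω (n + 1)| < 2 ^ (n + 1)) :
    ∀ n, Uncovered ω n t := by
  have hge : ∀ n, N ≤ n → Uncovered ω n t := by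
    intro n hn
    induction n, hn using Nat.le_induction with
    | base => exact hN
    | succ n hn ih =>
      obtain ⟨hne, hlt⟩ := hstep n hn
      exact uncovered_succ_iff.2
        ⟨ih, fun hdvd => hne (sub_eq_zero.1 (Int.eq_zero_of_abs_lt_dvd hdvd hlt))⟩
  exact fun n => (hge _ (le_max_right n N)).mono (le_max_left n N)

theorem exists_forall_uncovered_of_eventually_true {N : ℕ} (hN : ∀ n, N ≤ n → ω n = true) :
    ∃ t, ∀ n, Uncovered ω n t := by
  obtain ⟨t, ht, htd⟩ :=
    exists_mem_Ioc_dvd_sub (by positivity : (0 : ℤ) < 2 ^ N) (-2 ^ N) (uncoveredResidue ω N)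
  refine ⟨t, forall_uncovered_of_stable ((uncovered_iff_dvd ω N t).2 htd) fun n hn => ?_⟩
  have hc := cseq_succ_mem_Ioc_of_true (hN n hn)
  have hNn : (2 : ℤ) ^ N ≤ 2 ^ n := pow_le_pow_right₀ (by norm_num) hn
  simp only [mem_Ioc, neg_add_cancel] at ht hc
  rw [pow_succ, abs_lt]
  exact ⟨(ht.2.trans_lt hc.1).ne, by linarith, by linarith⟩

theorem exists_forall_uncovered_of_eventually_false {N : ℕ} (hN : ∀ n, N ≤ n → ω n = false) :
    ∃ t, ∀ n, Uncovered ω n t := by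
  obtain ⟨t, ht, htd⟩ :=
    exists_mem_Ioc_dvd_sub (by positivity : (0 : ℤ) < 2 ^ N) 0 (uncoveredResidue ω N)
  refine ⟨t, forall_uncovered_of_stable ((uncovered_iff_dvd ω N t).2 htd) fun n hn => ?_⟩
  have hc := cseq_succ_mem_Ioc_of_false (hN n hn)
  have hNn : (2 : ℤ) ^ N ≤ 2 ^ n := pow_le_pow_right₀ (by norm_num) hn
  simp only [mem_Ioc, zero_add] at ht hc
  rw [pow_succ, abs_lt]
  exact ⟨(hc.2.trans_lt ht.1).ne', by linarith, by linarith⟩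

end

theorem unique_uncovered_of_finitely_many_zeros_or_ones (ω : ℕ → Bool)
    (h : (∃ N : ℕ, ∀ n, N ≤ n → ω n = true) ∨ (∃ N : ℕ, ∀ n, N ≤ n → ω n = false)) :
    ∃ t : ℤ, (∀ k : ℕ, 1 ≤ k → ¬ (2 ^ k : ℤ) ∣ (t - cseq ω k)) ∧
      ∀ m : ℤ, m ≠ t → ∃! k : ℕ, 1 ≤ k ∧ (2 ^ k : ℤ) ∣ (m - cseq ω k) := by
  obtain ⟨t, ht⟩ : ∃ t, ∀ n, Uncovered ω n t := h.elim
    (fun ⟨_, hN⟩ => exists_forall_uncovered_of_eventually_true hN)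
    (fun ⟨_, hN⟩ => exists_forall_uncovered_of_eventually_false hN)
  refine ⟨t, fun k hk => ht k k hk le_rfl, fun m hm => ?_⟩
  obtain ⟨k, hk, hkm⟩ : ∃ k, 1 ≤ k ∧ (2 ^ k : ℤ) ∣ m - cseq ω k := by
    by_contra! hcov
    exact hm (eq_of_forall_uncovered (fun n k hk _ => hcov k hk) ht)
  exact ⟨k, ⟨hk, hkm⟩, fun j ⟨hj, hjm⟩ => eq_of_dvd_sub_cseq hj hk hjm hkm⟩
end

section
/- For ω ∈ {0,1}^∞ that is not cofinal with 0^∞ and not cofinal with 1^∞, the orbit of ω under the group G = ⟨a,b⟩ equals the cofinality class of ω. If ω is cofinal with 0^∞ or with 1^∞, then the orbit of ω under G equals the union of the cofinality classes of 0^∞ and 1^∞. -/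
/-- The map `b` on infinite binary sequences: `b(0s) = 0·b(s)`, `b(1s) = 1·a(s)`. -/
def bMap (ξ : ℕ → Bool) : ℕ → Bool :=
  fun n =>
    if ∃ m < n, (∀ k < m, ξ k = false) ∧ (∀ k, m ≤ k → k < n → ξ k = true) then !ξ n else ξ n

/-- One step of the action of a generator. -/
def step (ξ η : ℕ → Bool) : Prop := η = aMap ξ ∨ η = bMap ξ

/-- The orbit of `ω` under the group `G = ⟨a,b⟩` generated by the bijections `a` and `b`:
the equivalence class of `ω` under the equivalence relation generated by applying `a`, `b`. -/
def orbitOf (ω : ℕ → Bool) : Set (ℕ → Bool) := {ξ | Relation.EqvGen step ω ξ}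

private lemma cof_refl (ξ : ℕ → Bool) : Cofinal ξ ξ := ⟨0, fun _ _ => rfl⟩

private lemma cof_symm {ξ η : ℕ → Bool} (h : Cofinal ξ η) : Cofinal η ξ := by
  obtain ⟨N, hN⟩ := h; exact ⟨N, fun n hn => (hN n hn).symm⟩

private lemma cof_trans {ξ η ζ : ℕ → Bool} (h1 : Cofinal ξ η) (h2 : Cofinal η ζ) :
    Cofinal ξ ζ := by
  obtain ⟨N, hN⟩ := h1; obtain ⟨M, hM⟩ := h2
  exact ⟨max N M, fun n hn =>
    (hN n (le_trans (le_max_left _ _) hn)).trans (hM n (le_trans (le_max_right _ _) hn))⟩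

private lemma connect : ∀ (N : ℕ) (ξ η : ℕ → Bool), (∀ n, N ≤ n → ξ n = η n) →
    Relation.EqvGen step ξ η := by
  intro N
  induction N with
  | zero =>
      intro ξ η h
      have : ξ = η := funext fun n => h n (Nat.zero_le n)
      exact this ▸ Relation.EqvGen.refl ξ
  | succ N ih =>
      have key : ∀ ξ η : ℕ → Bool, (∀ n, N + 1 ≤ n → ξ n = η n) → ξ N = false → η N = true →
          Relation.EqvGen step ξ η := by
        intro ξ η h hξ hη
        set ξ₁ : ℕ → Bool := fun n => if n < N then true else ξ n with hξ₁
        have e1 : Relation.EqvGen step ξ ξ₁ :=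
          ih ξ ξ₁ (fun n hn => by simp [hξ₁, Nat.not_lt.2 hn])
        have e2 : Relation.EqvGen step ξ₁ (aMap ξ₁) := Relation.EqvGen.rel _ _ (Or.inl rfl)
        have e3 : Relation.EqvGen step (aMap ξ₁) η := by
          apply ih
          intro n hn
          by_cases hne : n = N
          · subst hne
            have hc : ∀ k, k < n → ξ₁ k = true := fun k hk => by simp [hξ₁, hk]
            have h1 : aMap ξ₁ n = !ξ₁ n := by simp only [aMap]; rw [if_pos hc]
            rw [h1]
            have : ξ₁ n = false := by simp [hξ₁, hξ]
            rw [this, hη]; rfl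
          · have hlt : N < n := by omega
            have hc : ¬ ∀ k, k < n → ξ₁ k = true := by
              intro H
              have := H N hlt
              simp [hξ₁, hξ] at this
            have h1 : aMap ξ₁ n = ξ₁ n := by simp only [aMap]; rw [if_neg hc]
            rw [h1]
            have : ξ₁ n = ξ n := by simp [hξ₁, Nat.not_lt.2 (le_of_lt hlt)]
            rw [this]
            exact h n hlt
        exact Relation.EqvGen.trans _ _ _ e1 (Relation.EqvGen.trans _ _ _ e2 e3)
      intro ξ η h
      by_cases hNe : ξ N = η N
      · apply ih
        intro n hn
        rcases eq_or_lt_of_le hn with rfl | hlt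
        · exact hNe
        · exact h n hlt
      · cases hb : ξ N with
        | false =>
            have hη : η N = true := by
              cases hb2 : η N
              · rw [hb, hb2] at hNe; exact absurd rfl hNe
              · rfl
            exact key ξ η h hb hη
        | true =>
            have hη : η N = false := by
              cases hb2 : η N
              · rfl
              · rw [hb, hb2] at hNe; exact absurd rfl hNe
            exact Relation.EqvGen.symm _ _ (key η ξ (fun n hn => (h n hn).symm) hη hb)

private def InS (ξ : ℕ → Bool) : Prop :=
  Cofinal ξ (fun _ => false) ∨ Cofinal ξ (fun _ => true)

private lemma inS_of_cofinal {ξ η : ℕ → Bool} (h : Cofinal ξ η) (hη : InS η) : InS ξ :=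
  hη.elim (fun h0 => Or.inl (cof_trans h h0)) (fun h1 => Or.inr (cof_trans h h1))

private lemma stepA (ξ : ℕ → Bool) : Cofinal (aMap ξ) ξ ∨ (InS ξ ∧ InS (aMap ξ)) := by
  by_cases h : ∃ j, ξ j = false
  · obtain ⟨j, hj⟩ := h
    left
    refine ⟨j + 1, fun n hn => ?_⟩
    have hc : ¬ ∀ k, k < n → ξ k = true := by
      intro H
      have := H j (by omega)
      rw [hj] at this; simp at this
    simp only [aMap]; rw [if_neg hc]
  · push_neg at h
    have h' : ∀ j, ξ j = true := by
      intro j; cases hj : ξ j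
      · exact absurd hj (h j)
      · rfl
    refine Or.inr ⟨Or.inr ⟨0, fun n _ => h' n⟩, Or.inl ⟨0, fun n _ => ?_⟩⟩
    have h1 : aMap ξ n = !ξ n := by simp only [aMap]; rw [if_pos (fun k _ => h' k)]
    rw [h1, h' n]; rfl

private lemma stepB (ξ : ℕ → Bool) : Cofinal (bMap ξ) ξ ∨ (InS ξ ∧ InS (bMap ξ)) := by
  by_cases h : ∃ i, ∃ j, i < j ∧ ξ i = true ∧ ξ j = false
  · obtain ⟨i, j, hij, hi, hj⟩ := h
    left
    refine ⟨j + 1, fun n hn => ?_⟩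
    have hc : ¬ ∃ m, m < n ∧ (∀ k, k < m → ξ k = false) ∧ (∀ k, m ≤ k → k < n → ξ k = true) := by
      rintro ⟨m, hmn, hf, ht⟩
      by_cases hmi : i < m
      · have := hf i hmi
        rw [hi] at this; simp at this
      · have := ht j (by omega) (by omega)
        rw [hj] at this; simp at this
    simp only [bMap]
    rw [if_neg hc]
  · push_neg at h
    by_cases h2 : ∃ i, ξ i = true
    · have hm := Nat.find_spec h2
      set m := Nat.find h2 with hmdef
      have hfalse : ∀ k, k < m → ξ k = false := by
        intro k hk
        have := Nat.find_min h2 hk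
        cases hkv : ξ k
        · rfl
        · exact absurd hkv this
      have htrue : ∀ k, m ≤ k → ξ k = true := by
        intro k hk
        rcases eq_or_lt_of_le hk with rfl | hlt
        · exact hm
        · cases hkv : ξ k
          · exact absurd hkv (h m k hlt hm)
          · rfl
      refine Or.inr ⟨Or.inr ⟨m, fun n hn => htrue n hn⟩, Or.inl ⟨m + 1, fun n hn => ?_⟩⟩
      have hc : ∃ m', m' < n ∧ (∀ k, k < m' → ξ k = false) ∧
          (∀ k, m' ≤ k → k < n → ξ k = true) :=
        ⟨m, by omega, hfalse, fun k hk _ => htrue k hk⟩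
      have h1 : bMap ξ n = !ξ n := by simp only [bMap]; rw [if_pos hc]
      rw [h1, htrue n (by omega)]; rfl
    · push_neg at h2
      have h0 : ∀ i, ξ i = false := by
        intro i; cases hi : ξ i
        · rfl
        · exact absurd hi (h2 i)
      left
      refine ⟨0, fun n _ => ?_⟩
      have hc : ¬ ∃ m, m < n ∧ (∀ k, k < m → ξ k = false) ∧
          (∀ k, m ≤ k → k < n → ξ k = true) := by
        rintro ⟨m, hmn, _, ht⟩
        have := ht m le_rfl hmn
        rw [h0 m] at this; simp at this
      simp only [bMap]; rw [if_neg hc]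

private lemma orb : ∀ x y : (ℕ → Bool), Relation.EqvGen step x y →
    Cofinal x y ∨ (InS x ∧ InS y) := by
  intro x y h
  induction h with
  | rel x y hs =>
      rcases hs with h1 | h1
      · subst h1
        rcases stepA x with hc | hS
        · exact Or.inl (cof_symm hc)
        · exact Or.inr hS
      · subst h1
        rcases stepB x with hc | hS
        · exact Or.inl (cof_symm hc)
        · exact Or.inr hS
  | refl x => exact Or.inl (cof_refl x)
  | symm x y _ ih =>
      rcases ih with hc | ⟨ha, hb⟩
      · exact Or.inl (cof_symm hc)
      · exact Or.inr ⟨hb, ha⟩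
  | trans x y z _ _ ih1 ih2 =>
      rcases ih1 with hc1 | ⟨ha1, hb1⟩ <;> rcases ih2 with hc2 | ⟨ha2, hb2⟩
      · exact Or.inl (cof_trans hc1 hc2)
      · exact Or.inr ⟨inS_of_cofinal hc1 ha2, hb2⟩
      · exact Or.inr ⟨ha1, inS_of_cofinal (cof_symm hc2) hb1⟩
      · exact Or.inr ⟨ha1, hb2⟩

private lemma eqv_of_cofinal {ξ η : ℕ → Bool} (h : Cofinal ξ η) : Relation.EqvGen step ξ η := by
  obtain ⟨N, hN⟩ := h
  exact connect N ξ η hN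

private lemma eqv10 : Relation.EqvGen step (fun _ => true) (fun _ => false) :=
  Relation.EqvGen.rel _ _ (Or.inl (funext fun n => by simp [aMap]))

theorem orbit_eq_cofinality_class (ω : ℕ → Bool) :
    ((¬ Cofinal ω (fun _ => false) ∧ ¬ Cofinal ω (fun _ => true)) →
      orbitOf ω = {ξ | Cofinal ξ ω}) ∧
    ((Cofinal ω (fun _ => false) ∨ Cofinal ω (fun _ => true)) →
      orbitOf ω = {ξ | Cofinal ξ (fun _ => false)} ∪ {ξ | Cofinal ξ (fun _ => true)}) := by
  constructor
  · rintro ⟨h0, h1⟩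
    ext ξ
    simp only [orbitOf, Set.mem_setOf_eq]
    constructor
    · intro hE
      rcases orb ω ξ hE with hc | ⟨hω, _⟩
      · exact cof_symm hc
      · rcases hω with hω | hω
        · exact absurd hω h0
        · exact absurd hω h1
    · intro hc
      exact eqv_of_cofinal (cof_symm hc)
  · intro hS
    ext ξ
    simp only [orbitOf, Set.mem_setOf_eq, Set.mem_union]
    constructor
    · intro hE
      rcases orb ω ξ hE with hc | ⟨_, hξ⟩
      · exact inS_of_cofinal (cof_symm hc) hS
      · exact hξ
    · intro hξ
      have hωc : Relation.EqvGen step ω (fun _ => false) := by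
        rcases hS with hS | hS
        · exact eqv_of_cofinal hS
        · exact Relation.EqvGen.trans _ _ _ (eqv_of_cofinal hS) eqv10
      have hξc : Relation.EqvGen step ξ (fun _ => false) := by
        rcases hξ with hξ | hξ
        · exact eqv_of_cofinal hξ
        · exact Relation.EqvGen.trans _ _ _ (eqv_of_cofinal hξ) eqv10
      exact Relation.EqvGen.trans _ _ _ hωc (Relation.EqvGen.symm _ _ hξc)
end
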